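/- Bound on the optimal dual variables of the inequality constraints: suppose there exists an admissible pair (X†, z†) with z† = ∫_Ω F(X†(β), β) dβ and gᵢ(z†) ≤ −ε for all i, for some ε > 0, and set F̄₀ := ∫_Ω F₀(X†(β), β) dβ < ∞. Then every (μ, ν) ∈ ℂᵖ × ℝ₊ᵐ with d(μ, ν) ≥ 0 satisfies Σᵢ νᵢ ≤ ( F̄₀ + λ · 𝔪(Ω) ) / ε. In particular, this bound holds for any dual optimal (μ*, ν*) when strong duality holds and the primal value is nonnegative. -/
import Mathlib


open MeasureTheory

noncomputable section

/-- The Lebesgue measure restricted to `Ω ⊆ ℝⁿ`. -/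
def mOmega {n : ℕ} (Ω : Set (Fin n → ℝ)) : Measure (Fin n → ℝ) :=
  volume.restrict Ω

/-- The "L0-norm": the (restricted Lebesgue) measure of the support of `X`. -/
def L0norm {n : ℕ} (Ω : Set (Fin n → ℝ)) (X : (Fin n → ℝ) → ℂ) : ℝ :=
  (mOmega Ω {β | X β ≠ 0}).toReal

/-- `Re[μᴴ x]` for vectors `μ, x ∈ ℂᵖ`. -/
def reInner {p : ℕ} (μ x : Fin p → ℂ) : ℝ :=
  (∑ i, (starRingEnd ℂ) (μ i) * x i).re

/-- A function `X : Ω → ℂ` is admissible if it is measurable and takes values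
in `P` almost everywhere on `Ω`. -/
def Admissible {n : ℕ} (Ω : Set (Fin n → ℝ)) (P : Set ℂ) (X : (Fin n → ℝ) → ℂ) : Prop :=
  Measurable X ∧ ∀ᵐ β ∂(mOmega Ω), X β ∈ P

/-- The Lagrangian of the sparse functional program. -/
def Lagrangian {n p m : ℕ} (Ω : Set (Fin n → ℝ)) (F₀ : ℂ → (Fin n → ℝ) → ℝ)
    (F : ℂ → (Fin n → ℝ) → Fin p → ℂ) (g : Fin m → (Fin p → ℂ) → ℝ) (lam : ℝ)
    (X : (Fin n → ℝ) → ℂ) (z : Fin p → ℂ) (μ : Fin p → ℂ) (ν : Fin m → ℝ) : ℝ :=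
  (∫ β, F₀ (X β) β ∂(mOmega Ω)) + lam * L0norm Ω X
    + reInner μ ((∫ β, F (X β) β ∂(mOmega Ω)) - z)
    + ∑ i, ν i * g i z

/-- The (extended-real valued) dual function. -/
def dualFn {n p m : ℕ} (Ω : Set (Fin n → ℝ)) (F₀ : ℂ → (Fin n → ℝ) → ℝ)
    (F : ℂ → (Fin n → ℝ) → Fin p → ℂ) (g : Fin m → (Fin p → ℂ) → ℝ) (lam : ℝ)
    (P : Set ℂ) (μ : Fin p → ℂ) (ν : Fin m → ℝ) : EReal :=
  sInf ((fun Xz : ((Fin n → ℝ) → ℂ) × (Fin p → ℂ) =>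
      ((Lagrangian Ω F₀ F g lam Xz.1 Xz.2 μ ν : ℝ) : EReal)) ''
    {Xz | Admissible Ω P Xz.1})

/-- **Bound on the dual variables of the inequality constraints.**  If there is an
admissible pair `(X†, z†)` with `z† = ∫_Ω F(X†(β), β) dβ` and `gᵢ(z†) ≤ −ε` for all `i`,
then every `(μ, ν) ∈ ℂᵖ × ℝ₊ᵐ` with `d(μ, ν) ≥ 0` satisfies
`Σᵢ νᵢ ≤ (F̄₀ + λ·𝔪(Ω)) / ε`, where `F̄₀ = ∫_Ω F₀(X†(β), β) dβ`. -/
theorem dual_nu_bound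
    {n p m : ℕ} (Ω : Set (Fin n → ℝ)) (hΩ : IsCompact Ω)
    (F₀ : ℂ → (Fin n → ℝ) → ℝ) (F : ℂ → (Fin n → ℝ) → Fin p → ℂ)
    (g : Fin m → (Fin p → ℂ) → ℝ) (hg : ∀ i, ConvexOn ℝ Set.univ (g i))
    (lam : ℝ) (hlam : 0 < lam) (P : Set ℂ) (hP0 : (0 : ℂ) ∈ P)
    (hintF₀ : ∀ X, Admissible Ω P X → Integrable (fun β => F₀ (X β) β) (mOmega Ω))
    (hintF : ∀ X, Admissible Ω P X → Integrable (fun β => F (X β) β) (mOmega Ω))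
    (ε : ℝ) (hε : 0 < ε)
    (Xd : (Fin n → ℝ) → ℂ) (zd : Fin p → ℂ)
    (hadm : Admissible Ω P Xd)
    (hzd : zd = ∫ β, F (Xd β) β ∂(mOmega Ω))
    (hgd : ∀ i, g i zd ≤ -ε)
    (μv : Fin p → ℂ) (ν : Fin m → ℝ) (hν : ∀ i, 0 ≤ ν i)
    (hd : (0 : EReal) ≤ dualFn Ω F₀ F g lam P μv ν) :
    ∑ i, ν i ≤ ((∫ β, F₀ (Xd β) β ∂(mOmega Ω)) + lam * (volume Ω).toReal) / ε := by
  set L := Lagrangian Ω F₀ F g lam Xd zd μv ν with hL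
  have hmem : ((L : ℝ) : EReal) ∈ ((fun Xz : ((Fin n → ℝ) → ℂ) × (Fin p → ℂ) =>
      ((Lagrangian Ω F₀ F g lam Xz.1 Xz.2 μv ν : ℝ) : EReal)) ''
    {Xz | Admissible Ω P Xz.1}) := ⟨(Xd, zd), hadm, rfl⟩
  have h1 : (0 : EReal) ≤ ((L : ℝ) : EReal) := le_trans hd (sInf_le hmem)
  have hL0 : (0 : ℝ) ≤ L := by exact_mod_cast h1
  have hfin : volume Ω < ⊤ := hΩ.measure_lt_top
  have hL0norm : L0norm Ω Xd ≤ (volume Ω).toReal := by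
    apply ENNReal.toReal_mono hfin.ne
    calc mOmega Ω {β | Xd β ≠ 0} ≤ mOmega Ω Set.univ := measure_mono (Set.subset_univ _)
      _ = volume Ω := by simp [mOmega]
  have hinner : reInner μv ((∫ β, F (Xd β) β ∂(mOmega Ω)) - zd) = 0 := by
    rw [hzd]
    simp [reInner]
  have hsum : ∑ i, ν i * g i zd ≤ -ε * ∑ i, ν i := by
    rw [Finset.mul_sum]
    apply Finset.sum_le_sum
    intro i _
    calc ν i * g i zd ≤ ν i * (-ε) := mul_le_mul_of_nonneg_left (hgd i) (hν i)
      _ = -ε * ν i := by ring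
  have key : 0 ≤ (∫ β, F₀ (Xd β) β ∂(mOmega Ω)) + lam * (volume Ω).toReal - ε * ∑ i, ν i := by
    have : L ≤ (∫ β, F₀ (Xd β) β ∂(mOmega Ω)) + lam * (volume Ω).toReal - ε * ∑ i, ν i := by
      rw [hL, Lagrangian, hinner]
      have := mul_le_mul_of_nonneg_left hL0norm hlam.le
      nlinarith [hsum]
    linarith
  rw [le_div_iff₀ hε]
  linarith
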